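/- Corollary of the index-shift bijection: with the notation above (𝔟, 𝔞, d, D, H from shift parameters b_1,...,b_n coprime to p and h ∈ ℤ), for each s ∈ {0,...,p^n−1} one has min{ D(s,t) : t ∈ {h,...,h+p^n−1}, 𝔞(t) ⪰ s } = min{ d(u) − d(u−s) : u ∈ {0,...,p^n−1}, u ⪰ s } = w(s). -/
import Mathlib


/-- The `i`-th base-`p` digit of `s`. -/
def dig (p s i : ℕ) : ℕ := s / p ^ i % p

/-- Digitwise partial order on base-`p` expansions: `s ⪯ t`. -/
def preceq (p s t : ℕ) : Prop := ∀ i, dig p s i ≤ dig p t i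

/-- The function 𝔟(s) = Σ_{i=1}^n s_{(n−i)} p^{n−i} b_i. -/
def bfun (p n : ℕ) (b : ℕ → ℤ) (s : ℕ) : ℤ :=
  ∑ i ∈ Finset.Icc 1 n, (dig p s (n - i) : ℤ) * (p : ℤ) ^ (n - i) * b i

/-- `D(s,t) = ⌊(𝔟(s)+t−h)/p^n⌋`. -/
def Dfun (p n : ℕ) (b : ℕ → ℤ) (h : ℤ) (s : ℕ) (t : ℤ) : ℤ :=
  Int.fdiv (bfun p n b s + t - h) ((p : ℤ) ^ n)


lemma dig_lt {p : ℕ} (hp : 2 ≤ p) (s i : ℕ) : dig p s i < p :=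
  Nat.mod_lt _ (by omega)

lemma dig_eq_zero_of_lt {p s i : ℕ} (h : s < p ^ i) : dig p s i = 0 := by
  simp [dig, Nat.div_eq_of_lt h]

lemma dig_zero_right (p s : ℕ) : dig p s 0 = s % p := by simp [dig]

lemma dig_succ (p s i : ℕ) : dig p s (i + 1) = dig p (s / p) i := by
  rw [dig, dig, Nat.div_div_eq_div_mul, ← pow_succ']

lemma eq_zero_of_dig {p : ℕ} (hp : 2 ≤ p) : ∀ s, (∀ i, dig p s i = 0) → s = 0 := by
  intro s
  induction s using Nat.strong_induction_on with
  | _ s ih =>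
    intro hd
    rcases Nat.eq_zero_or_pos s with h0 | h0
    · exact h0
    have h1 : s % p = 0 := by have := hd 0; rwa [dig_zero_right] at this
    have h2 : s / p = 0 := ih (s / p) (Nat.div_lt_self h0 (by omega)) (fun i => by
      rw [← dig_succ]; exact hd (i + 1))
    have h3 := Nat.div_add_mod s p
    rw [h1, h2] at h3
    omega

lemma dig_sub {p : ℕ} (hp : 2 ≤ p) : ∀ u s : ℕ, (∀ i, dig p s i ≤ dig p u i) →
    s ≤ u ∧ ∀ i, dig p (u - s) i = dig p u i - dig p s i := by
  intro u
  induction u using Nat.strong_induction_on with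
  | _ u ih =>
    intro s hs
    rcases Nat.eq_zero_or_pos u with h0 | h0
    · subst h0
      have hz : s = 0 := eq_zero_of_dig hp s (fun i => by
        have h1 := hs i
        have h2 : dig p 0 i = 0 := by simp [dig]
        omega)
      subst hz; simp [dig]
    obtain ⟨hle, hdig⟩ := ih (u / p) (Nat.div_lt_self h0 (by omega)) (s / p)
      (fun i => by rw [← dig_succ, ← dig_succ]; exact hs (i + 1))
    have hmod : s % p ≤ u % p := by have := hs 0; rwa [dig_zero_right, dig_zero_right] at this
    have hmlt : u % p < p := Nat.mod_lt _ (by omega)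
    have h3 : p * (u / p - s / p) = p * (u / p) - p * (s / p) := Nat.mul_sub ..
    have h4 : p * (s / p) ≤ p * (u / p) := Nat.mul_le_mul_left _ hle
    have h5 := Nat.div_add_mod u p
    have h6 := Nat.div_add_mod s p
    have key : ∀ A B c e : ℕ, B ≤ A → e ≤ c → (A + c) - (B + e) = (A - B) + (c - e) :=
      fun A B c e hBA hec => by omega
    have hus : u - s = p * (u / p - s / p) + (u % p - s % p) := by
      rw [h3]
      calc u - s = (p * (u / p) + u % p) - (p * (s / p) + s % p) := by rw [h5, h6]
        _ = (p * (u / p) - p * (s / p)) + (u % p - s % p) := key _ _ _ _ h4 hmod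
    constructor
    · calc s = p * (s / p) + s % p := h6.symm
        _ ≤ p * (u / p) + u % p := Nat.add_le_add h4 hmod
        _ = u := h5
    intro i
    match i with
    | 0 =>
      rw [dig_zero_right, dig_zero_right, dig_zero_right, hus,
        Nat.mul_add_mod, Nat.mod_eq_of_lt (by omega)]
    | i + 1 =>
      have hdiv : (u - s) / p = u / p - s / p := by
        have hlt : u % p - s % p < p := by omega
        rw [hus, Nat.mul_add_div (by omega : 0 < p), Nat.div_eq_of_lt hlt, Nat.add_zero]
      rw [dig_succ, dig_succ, dig_succ, hdiv, hdig]

lemma dig_add {p : ℕ} (hp : 2 ≤ p) : ∀ x y : ℕ, (∀ i, dig p x i + dig p y i < p) →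
    ∀ i, dig p (x + y) i = dig p x i + dig p y i := by
  intro x
  induction x using Nat.strong_induction_on with
  | _ x ih =>
    intro y hxy i
    rcases Nat.eq_zero_or_pos x with h0 | h0
    · subst h0; simp [dig]
    have h1 : x % p + y % p < p := by
      have := hxy 0; rwa [dig_zero_right, dig_zero_right] at this
    have h5 := Nat.div_add_mod x p
    have h6 := Nat.div_add_mod y p
    have hkey : x + y = p * (x / p + y / p) + (x % p + y % p) := by
      rw [Nat.mul_add]; omega
    match i with
    | 0 =>
      rw [dig_zero_right, dig_zero_right, dig_zero_right, hkey,
        Nat.mul_add_mod, Nat.mod_eq_of_lt h1]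
    | i + 1 =>
      have hdiv : (x + y) / p = x / p + y / p := by
        rw [hkey, Nat.mul_add_div (by omega : 0 < p), Nat.div_eq_of_lt h1, Nat.add_zero]
      rw [dig_succ, dig_succ, dig_succ, hdiv,
        ih (x / p) (Nat.div_lt_self h0 (by omega)) (y / p)
          (fun j => by rw [← dig_succ, ← dig_succ]; exact hxy (j + 1))]

lemma dig_pred_pow {p : ℕ} (hp : 2 ≤ p) (n i : ℕ) :
    dig p (p ^ n - 1) i = if i < n then p - 1 else 0 := by
  split
  · next hi =>
    have hpi : 1 ≤ p ^ i := Nat.one_le_pow _ _ (by omega)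
    have hpni : 1 ≤ p ^ (n - i) := Nat.one_le_pow _ _ (by omega)
    have hsplit : p ^ n - 1 = (p ^ i - 1) + (p ^ (n - i) - 1) * p ^ i := by
      rw [Nat.sub_mul, one_mul, ← pow_add]
      have : n - i + i = n := by omega
      rw [this]
      have : p ^ i ≤ p ^ n := Nat.pow_le_pow_right (by omega) (by omega)
      omega
    have hdiv : (p ^ n - 1) / p ^ i = p ^ (n - i) - 1 := by
      rw [hsplit, Nat.add_mul_div_right _ _ (by omega), Nat.div_eq_of_lt (by omega), Nat.zero_add]
    rw [dig, hdiv]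
    -- (p ^ (n - i) - 1) % p = p - 1, with n - i ≥ 1
    have hk : 1 ≤ n - i := by omega
    have hexp : p ^ (n - i) - 1 = (p ^ (n - i - 1) - 1) * p + (p - 1) := by
      rw [Nat.sub_mul, one_mul, ← pow_succ]
      have : n - i - 1 + 1 = n - i := by omega
      rw [this]
      have : p ≤ p ^ (n - i) := by
        calc p = p ^ 1 := (pow_one p).symm
        _ ≤ p ^ (n - i) := Nat.pow_le_pow_right (by omega) hk
      omega
    rw [hexp, Nat.mul_add_mod', Nat.mod_eq_of_lt (by omega)]
  · next hi =>
    exact dig_eq_zero_of_lt (lt_of_lt_of_le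
      (Nat.sub_lt (Nat.one_le_pow _ _ (by omega)) one_pos)
      (Nat.pow_le_pow_right (by omega) (by omega)))

lemma preceq_pred_pow {p n x : ℕ} (hp : 2 ≤ p) (hx : x < p ^ n) :
    preceq p x (p ^ n - 1) := by
  intro i
  rw [dig_pred_pow hp]
  split
  · have := dig_lt hp x i; omega
  · next hi =>
    have : dig p x i = 0 := dig_eq_zero_of_lt (lt_of_lt_of_le hx
      (Nat.pow_le_pow_right (by omega) (by omega)))
    omega

lemma bfun_add (p n : ℕ) (b : ℕ → ℤ) {x y : ℕ}
    (hxy : ∀ i, dig p (x + y) i = dig p x i + dig p y i) :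
    bfun p n b (x + y) = bfun p n b x + bfun p n b y := by
  unfold bfun
  rw [← Finset.sum_add_distrib]
  refine Finset.sum_congr rfl fun i _ => ?_
  rw [hxy]
  push_cast
  ring


lemma ediv_key (m X Z : ℤ) (hm : m ≠ 0) : (X + Z % m) / m = (X + Z) / m - Z / m := by
  have h1 : X + Z = (X + Z % m) + (Z / m) * m := by
    rw [Int.emod_def]; ring
  rw [h1, Int.add_mul_ediv_right _ _ hm]
  ring

lemma binj (p n : ℕ) (hp : p.Prime) (b : ℕ → ℤ) (a : ℤ → ℕ)
    (ha : ∀ t : ℤ, a t < p ^ n ∧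
      ((-(bfun p n b (a t)) : ℤ) : ZMod (p ^ n)) = ((t : ℤ) : ZMod (p ^ n)))
    {u v : ℕ} (hu : u < p ^ n) (hv : v < p ^ n)
    (heq : ((-(bfun p n b u) : ℤ) : ZMod (p ^ n)) = ((-(bfun p n b v) : ℤ) : ZMod (p ^ n))) :
    u = v := by
  haveI : NeZero (p ^ n) := ⟨pow_ne_zero _ hp.pos.ne'⟩
  set g : Fin (p ^ n) → ZMod (p ^ n) :=
    fun x => ((-(bfun p n b x) : ℤ) : ZMod (p ^ n)) with hg
  have hsurj : Function.Surjective g := by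
    intro z
    obtain ⟨h1, h2⟩ := ha (z.val : ℤ)
    refine ⟨⟨a (z.val : ℤ), h1⟩, ?_⟩
    rw [hg]
    simp only
    rw [h2]
    push_cast
    simp [ZMod.natCast_val, ZMod.cast_id]
  have hbij : Function.Bijective g :=
    (Fintype.bijective_iff_surjective_and_card g).mpr ⟨hsurj, by simp [ZMod.card]⟩
  have := hbij.injective (a₁ := ⟨u, hu⟩) (a₂ := ⟨v, hv⟩) (by simpa [hg] using heq)
  simpa using this

theorem stmt_19 (p n : ℕ) (hp : p.Prime) (hn : 1 ≤ n) (b : ℕ → ℤ)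
    (hb : ∀ i ∈ Finset.Icc 1 n, IsCoprime (b i) (p : ℤ))
    (a : ℤ → ℕ)
    -- `a` is the inverse of the bijection `s ↦ (−𝔟(s) mod p^n)`, extended to ℤ
    (ha : ∀ t : ℤ, a t < p ^ n ∧
      ((-(bfun p n b (a t)) : ℤ) : ZMod (p ^ n)) = ((t : ℤ) : ZMod (p ^ n)))
    (h : ℤ)
    -- `bb` is the unique element of `{h, …, h+p^n−1}` with `𝔞(bb) = p^n−1`
    (bb : ℤ) (hbb1 : h ≤ bb) (hbb2 : bb < h + p ^ n) (hbb3 : a bb = p ^ n - 1) :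
    ∀ s : ℕ, s < p ^ n →
      sInf ((fun t : ℤ => Dfun p n b h s t) ''
          {t : ℤ | h ≤ t ∧ t < h + p ^ n ∧ preceq p s (a t)}) =
      sInf ((fun u : ℕ => Dfun p n b h u bb - Dfun p n b h (u - s) bb) ''
          {u : ℕ | u < p ^ n ∧ preceq p s u}) := by
  intro s hs
  have hp2 : 2 ≤ p := hp.two_le
  have hq1 : 1 ≤ p ^ n := Nat.one_le_pow _ _ hp.pos
  set q : ℕ := p ^ n - 1 with hqdef
  set m : ℤ := (p : ℤ) ^ n with hmdef
  have hmN : m = ((p ^ n : ℕ) : ℤ) := by push_cast; rfl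
  have hm0 : 0 < m := by positivity
  -- congruence for bb
  have hbbq : -(bfun p n b q) ≡ bb [ZMOD ((p ^ n : ℕ) : ℤ)] := by
    have h2 := (ha bb).2
    rw [hbb3] at h2
    exact (ZMod.intCast_eq_intCast_iff _ _ _).mp h2
  -- the key computation, for any admissible t
  have main : ∀ t : ℤ, h ≤ t → t < h + (p : ℤ) ^ n → preceq p s (a t) →
      (q - a t + s < p ^ n ∧ preceq p s (q - a t + s)) ∧
      Dfun p n b h s t =
        Dfun p n b h (q - a t + s) bb - Dfun p n b h (q - a t + s - s) bb := by
    intro t ht1 ht2 hpre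
    obtain ⟨hu0lt, hcongt⟩ := ha t
    set u0 := a t with hu0def
    obtain ⟨hsu0, _⟩ := dig_sub hp2 u0 s hpre
    have hu0q : u0 ≤ q := by omega
    have hpq : preceq p u0 q := preceq_pred_pow hp2 hu0lt
    obtain ⟨hqu0, hdq⟩ := dig_sub hp2 q u0 hpq
    have hnocarry : ∀ i, dig p (q - u0) i + dig p s i < p := by
      intro i
      have h1 := hdq i
      have h2 := hpre i
      have h3 := dig_lt hp2 u0 i
      have h4 := hpq i
      have h5 := dig_lt hp2 q i
      omega
    have hdigu : ∀ i, dig p (q - u0 + s) i = dig p (q - u0) i + dig p s i :=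
      dig_add hp2 _ _ hnocarry
    have hult : q - u0 + s < p ^ n := by omega
    have hupre : preceq p s (q - u0 + s) := fun i => by rw [hdigu i]; omega
    have hus : q - u0 + s - s = q - u0 := by omega
    have hbu : bfun p n b (q - u0 + s) = bfun p n b (q - u0) + bfun p n b s :=
      bfun_add p n b hdigu
    have hbq : bfun p n b q = bfun p n b u0 + bfun p n b (q - u0) := by
      have he : u0 + (q - u0) = q := by omega
      have hd : ∀ i, dig p (u0 + (q - u0)) i = dig p u0 i + dig p (q - u0) i := by
        intro i
        have h1 := hdq i
        have h2 := hpq i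
        rw [he, hdq i]
        omega
      have hbq' := bfun_add p n b hd
      rw [he] at hbq'
      exact hbq'
    -- congruences
    have hmod1 : -(bfun p n b u0) ≡ t [ZMOD ((p ^ n : ℕ) : ℤ)] :=
      (ZMod.intCast_eq_intCast_iff _ _ _).mp hcongt
    have hc1 : bfun p n b (q - u0) + (bb - h) ≡
        bfun p n b (q - u0) + (-(bfun p n b q) - h) [ZMOD ((p ^ n : ℕ) : ℤ)] :=
      Int.ModEq.add_left _ (Int.ModEq.sub_right _ hbbq.symm)
    have hc2 : t - h ≡ -(bfun p n b u0) - h [ZMOD ((p ^ n : ℕ) : ℤ)] :=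
      Int.ModEq.sub_right _ hmod1.symm
    have hc3 : bfun p n b (q - u0) + (-(bfun p n b q) - h) = -(bfun p n b u0) - h := by
      rw [hbq]; ring
    have hc4 : t - h ≡ bfun p n b (q - u0) + (bb - h) [ZMOD ((p ^ n : ℕ) : ℤ)] :=
      hc2.trans (hc3 ▸ hc1).symm
    have hth : t - h = (bfun p n b (q - u0) + (bb - h)) % m := by
      have hYc : (t - h) % m = (bfun p n b (q - u0) + (bb - h)) % m := by
        rw [hmN]; exact hc4
      rw [← hYc, Int.emod_eq_of_lt (by omega) (by omega)]
    refine ⟨⟨hult, hupre⟩, ?_⟩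
    show Int.fdiv (bfun p n b s + t - h) m =
      Int.fdiv (bfun p n b (q - u0 + s) + bb - h) m -
      Int.fdiv (bfun p n b (q - u0 + s - s) + bb - h) m
    rw [hus, Int.fdiv_eq_ediv_of_nonneg _ hm0.le, Int.fdiv_eq_ediv_of_nonneg _ hm0.le, Int.fdiv_eq_ediv_of_nonneg _ hm0.le,
      show bfun p n b s + t - h = bfun p n b s + (t - h) from by ring, hth,
      show bfun p n b (q - u0 + s) + bb - h =
        bfun p n b s + (bfun p n b (q - u0) + (bb - h)) from by rw [hbu]; ring,
      show bfun p n b (q - u0) + bb - h = bfun p n b (q - u0) + (bb - h) from by ring]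
    exact ediv_key m _ _ hm0.ne'
  -- existence of a suitable t for each u0
  have mk_t : ∀ u0 : ℕ, u0 < p ^ n → ∃ t : ℤ, h ≤ t ∧ t < h + (p : ℤ) ^ n ∧ a t = u0 := by
    intro u0 hu0
    set t : ℤ := h + (-(bfun p n b u0) - h) % m with htdef
    have hnn := Int.emod_nonneg (-(bfun p n b u0) - h) hm0.ne'
    have hlt := Int.emod_lt_of_pos (-(bfun p n b u0) - h) hm0
    refine ⟨t, by omega, by omega, ?_⟩
    obtain ⟨h1, h2⟩ := ha t
    apply binj p n hp b a ha h1 hu0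
    rw [h2]
    rw [ZMod.intCast_eq_intCast_iff]
    calc t ≡ h + (-(bfun p n b u0) - h) [ZMOD ((p ^ n : ℕ) : ℤ)] := by
          rw [htdef, ← hmN]
          exact Int.ModEq.add_left _ (Int.emod_emod_of_dvd _ dvd_rfl)
      _ = -(bfun p n b u0) := by ring
  -- set equality
  apply congrArg
  apply Set.Subset.antisymm
  · rintro x ⟨t, ⟨ht1, ht2, ht3⟩, rfl⟩
    obtain ⟨⟨h1, h2⟩, h3⟩ := main t ht1 ht2 ht3
    exact ⟨q - a t + s, ⟨h1, h2⟩, h3.symm⟩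
  · rintro x ⟨u, ⟨hu1, hu2⟩, rfl⟩
    obtain ⟨hsu, hdigus⟩ := dig_sub hp2 u s hu2
    have hu0lt : q - (u - s) < p ^ n := by omega
    obtain ⟨t, ht1, ht2, ht3⟩ := mk_t (q - (u - s)) hu0lt
    have hpret : preceq p s (a t) := by
      rw [ht3]
      intro i
      have husq : preceq p (u - s) q := preceq_pred_pow hp2 (by omega)
      obtain ⟨_, hd2⟩ := dig_sub hp2 q (u - s) husq
      have e1 := hd2 i
      have e2 := hdigus i
      have e3 := hu2 i
      have e4 := husq i
      have e5 := dig_lt hp2 u i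
      have e6 : dig p u i ≤ dig p q i := preceq_pred_pow hp2 hu1 i
      omega
    obtain ⟨⟨h1, h2⟩, h3⟩ := main t ht1 ht2 hpret
    have huu : q - a t + s = u := by rw [ht3]; omega
    rw [huu] at h3
    exact ⟨t, ⟨ht1, ht2, hpret⟩, h3⟩
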